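/- arXiv:2509.12023 — 2 statements merged into one kernel-verified Lean document; each statement's English description precedes it below -/
import Mathlib

section
/- (Fractional Sobolev inequality) Let N ≥ 1, s ∈ (0,1) and 1 ≤ p < N/s, and set p*_s := Np/(N−sp). Then there exists a constant C = C(N,s,p) > 0 such that for every u ∈ W^{s,p}(ℝ^N), ‖u‖_{L^{p*_s}(ℝ^N)} ≤ C [u]_{W^{s,p}(ℝ^N)}. In particular u ∈ L^q(ℝ^N) for every q ∈ [p, p*_s]. -/
open MeasureTheory Set Metric Filter
open scoped ENNReal NNReal Topology

noncomputable section

abbrev Rn (N : ℕ) : Type := EuclideanSpace ℝ (Fin N)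

/-- Radius of the ball centered at the origin having volume `m`. -/
def symRadius (N : ℕ) (m : ℝ≥0∞) : ℝ :=
  (m / volume (ball (0 : Rn N) 1)).toReal ^ ((1 : ℝ) / N)

/-- Schwarz symmetrization `A*` of a set: the open ball centered at the origin
with the same volume. -/
def symSet {N : ℕ} (A : Set (Rn N)) : Set (Rn N) :=
  ball 0 (symRadius N (volume A))

/-- Symmetric decreasing rearrangement via the layer-cake formula
`u*(x) = ∫₀^∞ χ_{{u>t}*}(x) dt`. -/
def symDecr {N : ℕ} (u : Rn N → ℝ) (x : Rn N) : ℝ :=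
  (∫⁻ t in Ioi (0 : ℝ), (symSet {y | u y > t}).indicator (fun _ => (1 : ℝ≥0∞)) x).toReal

/-- `u` vanishes at infinity: all superlevel sets have finite measure. -/
def VanishesAtInfinity {N : ℕ} (u : Rn N → ℝ) : Prop :=
  ∀ t > 0, volume {x | u x > t} < ∞

/-- `p`-th power of the Gagliardo seminorm `[u]_{W^{s,p}}^p`. -/
def gagliardoEnergy (N : ℕ) (s p : ℝ) (u : Rn N → ℝ) : ℝ≥0∞ :=
  ∫⁻ x, ∫⁻ y, ENNReal.ofReal (|u x - u y| ^ p / ‖x - y‖ ^ ((N : ℝ) + s * p))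

/-- Gagliardo seminorm `[u]_{W^{s,p}}`. -/
def gagliardoSemi (N : ℕ) (s p : ℝ) (u : Rn N → ℝ) : ℝ≥0∞ :=
  gagliardoEnergy N s p u ^ (1 / p)

/-- Membership in `W^{s,p}(ℝ^N)`. -/
def MemWsp (N : ℕ) (s p : ℝ) (u : Rn N → ℝ) : Prop :=
  MemLp u (ENNReal.ofReal p) volume ∧ gagliardoEnergy N s p u < ∞

/-- The `s`-fractional perimeter. -/
def fracPerimeter (N : ℕ) (s : ℝ) (E : Set (Rn N)) : ℝ≥0∞ :=
  ∫⁻ x in E, ∫⁻ y in Eᶜ, ENNReal.ofReal (1 / ‖x - y‖ ^ ((N : ℝ) + s))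

/-!
Hedberg-type argument. For `x` and `r > 0`, averaging `|u(x)| ≤ |u(x) - u(y)| + |u(y)|` over
`y ∈ B(x, r)` and applying Hölder to both terms gives
`|u(x)| ≲ r ^ s G(x) ^ (1/p) + r ^ (-N/q) ‖u‖_q`, where `q = p*_s` and
`G(x) = ∫ |u(x) - u(y)| ^ p / |x - y| ^ (N + s p) dy`. Choosing `r ^ N = ‖u‖_q ^ p / G(x)` yields
`|u(x)| ^ q ≲ ‖u‖_q ^ (q - p) G(x)`; integrating in `x` and cancelling `‖u‖_q ^ (q - p)` gives
`‖u‖_q ^ p ≲ [u] ^ p`. The cancellation needs `‖u‖_q < ∞`, so the estimate is first proved for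
the bounded truncations `min |u| n`, which are in `L^q` and have smaller Gagliardo energy, and
then passed to the limit by Fatou. The `L^t` bounds for `p ≤ t ≤ q` follow by interpolation.
-/

section Lebesgue

variable {α E : Type*} [MeasurableSpace α] [NormedAddCommGroup E] {μ : Measure α}

theorem setLIntegral_enorm_le_eLpNorm_restrict_mul {f : α → E} {t : Set α} {q : ℝ}
    (hf : AEStronglyMeasurable f (μ.restrict t)) (hq : 1 ≤ q) :
    ∫⁻ x in t, ‖f x‖ₑ ∂μ ≤ eLpNorm f (ENNReal.ofReal q) (μ.restrict t) * μ t ^ (1 - 1 / q) := by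
  have h := eLpNorm_le_eLpNorm_mul_rpow_measure_univ (p := 1) (q := ENNReal.ofReal q)
    (ENNReal.one_le_ofReal.mpr hq) hf
  rwa [eLpNorm_one_eq_lintegral_enorm, Measure.restrict_apply_univ, ENNReal.toReal_ofReal
    (by linarith), ENNReal.toReal_one, div_one] at h

theorem enorm_mul_measure_le_setLIntegral (c : E) {f : α → E} (t : Set α)
    (hf : AEStronglyMeasurable f (μ.restrict t)) :
    ‖c‖ₑ * μ t ≤ ∫⁻ y in t, ‖c - f y‖ₑ ∂μ + ∫⁻ y in t, ‖f y‖ₑ ∂μ := by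
  calc ‖c‖ₑ * μ t = ∫⁻ _ in t, ‖c‖ₑ ∂μ := (setLIntegral_const _ _).symm
    _ ≤ ∫⁻ y in t, (‖c - f y‖ₑ + ‖f y‖ₑ) ∂μ :=
      lintegral_mono fun y => by simpa using enorm_add_le (c - f y) (f y)
    _ = _ := lintegral_add_right' _ hf.enorm

theorem enorm_le_measure_rpow_mul_eLpNorm_add {t : Set α} (ht0 : μ t ≠ 0) (htt : μ t ≠ ⊤)
    (c : E) {f : α → E} (hf : AEStronglyMeasurable f (μ.restrict t)) {p q : ℝ} (hp : 1 ≤ p)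
    (hq : 1 ≤ q) :
    ‖c‖ₑ ≤ μ t ^ (-(1 / p)) * eLpNorm (fun y => c - f y) (ENNReal.ofReal p) (μ.restrict t) +
      μ t ^ (-(1 / q)) * eLpNorm f (ENNReal.ofReal q) (μ.restrict t) := by
  have hsplit (a : ℝ) : μ t ^ (1 - 1 / a) = μ t ^ (-(1 / a)) * μ t := by
    rw [sub_eq_neg_add, ENNReal.rpow_add _ _ ht0 htt, ENNReal.rpow_one]
  refine (ENNReal.mul_le_mul_iff_left ht0 htt).mp ?_
  calc ‖c‖ₑ * μ t ≤ ∫⁻ y in t, ‖c - f y‖ₑ ∂μ + ∫⁻ y in t, ‖f y‖ₑ ∂μ :=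
        enorm_mul_measure_le_setLIntegral c t hf
    _ ≤ eLpNorm (fun y => c - f y) (ENNReal.ofReal p) (μ.restrict t) * μ t ^ (1 - 1 / p) +
          eLpNorm f (ENNReal.ofReal q) (μ.restrict t) * μ t ^ (1 - 1 / q) :=
        add_le_add
          (setLIntegral_enorm_le_eLpNorm_restrict_mul (aestronglyMeasurable_const.sub hf) hp)
          (setLIntegral_enorm_le_eLpNorm_restrict_mul hf hq)
    _ = _ := by rw [hsplit, hsplit]; ring

theorem memLp_ofReal_iff_lintegral_rpow_enorm_lt_top {f : α → E} {p : ℝ} (hp : 0 < p) :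
    MemLp f (ENNReal.ofReal p) μ ↔ AEStronglyMeasurable f μ ∧ ∫⁻ x, ‖f x‖ₑ ^ p ∂μ < ⊤ := by
  rw [MemLp, eLpNorm_lt_top_iff_lintegral_rpow_enorm_lt_top (by simpa using hp)
    ENNReal.ofReal_ne_top, ENNReal.toReal_ofReal hp.le]

theorem MemLp.of_bound_of_exponent_le {f : α → E} {p q : ℝ} (C : ℝ) (hp : 0 < p)
    (hpq : p ≤ q) (hf : MemLp f (ENNReal.ofReal p) μ) (hC : ∀ x, ‖f x‖ ≤ C) :
    MemLp f (ENNReal.ofReal q) μ := by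
  rw [memLp_ofReal_iff_lintegral_rpow_enorm_lt_top hp] at hf
  rw [memLp_ofReal_iff_lintegral_rpow_enorm_lt_top (hp.trans_le hpq)]
  have hCt : ‖C‖ₑ ^ (q - p) < ⊤ := ENNReal.rpow_lt_top_of_nonneg (by linarith) enorm_ne_top
  have hpt (x : α) : ‖f x‖ₑ ^ q ≤ ‖C‖ₑ ^ (q - p) * ‖f x‖ₑ ^ p := by
    have hfC : ‖f x‖ₑ ≤ ‖C‖ₑ := enorm_le_iff_norm_le.mpr ((hC x).trans (le_abs_self C))
    calc ‖f x‖ₑ ^ q = ‖f x‖ₑ ^ (q - p) * ‖f x‖ₑ ^ p := by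
          rw [← ENNReal.rpow_add_of_nonneg _ _ (by linarith) hp.le, sub_add_cancel]
      _ ≤ ‖C‖ₑ ^ (q - p) * ‖f x‖ₑ ^ p := by gcongr
  refine ⟨hf.1, ?_⟩
  calc ∫⁻ x, ‖f x‖ₑ ^ q ∂μ ≤ ∫⁻ x, ‖C‖ₑ ^ (q - p) * ‖f x‖ₑ ^ p ∂μ := lintegral_mono hpt
    _ = ‖C‖ₑ ^ (q - p) * ∫⁻ x, ‖f x‖ₑ ^ p ∂μ := lintegral_const_mul' _ _ hCt.ne
    _ < ⊤ := ENNReal.mul_lt_top hCt hf.2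

theorem MemLp.of_exponent_mem_Icc {f : α → E} {p q t : ℝ} (hp : 0 < p) (hpt : p ≤ t)
    (htq : t ≤ q) (hfp : MemLp f (ENNReal.ofReal p) μ) (hfq : MemLp f (ENNReal.ofReal q) μ) :
    MemLp f (ENNReal.ofReal t) μ := by
  rw [memLp_ofReal_iff_lintegral_rpow_enorm_lt_top hp] at hfp
  rw [memLp_ofReal_iff_lintegral_rpow_enorm_lt_top (by linarith)] at hfq
  rw [memLp_ofReal_iff_lintegral_rpow_enorm_lt_top (by linarith)]
  have hpt (x : α) : ‖f x‖ₑ ^ t ≤ ‖f x‖ₑ ^ p + ‖f x‖ₑ ^ q := by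
    rcases le_total ‖f x‖ₑ 1 with h | h
    · exact (ENNReal.rpow_le_rpow_of_exponent_ge h hpt).trans le_self_add
    · exact (ENNReal.rpow_le_rpow_of_exponent_le h htq).trans le_add_self
  refine ⟨hfp.1, ?_⟩
  calc ∫⁻ x, ‖f x‖ₑ ^ t ∂μ ≤ ∫⁻ x, (‖f x‖ₑ ^ p + ‖f x‖ₑ ^ q) ∂μ := lintegral_mono hpt
    _ = ∫⁻ x, ‖f x‖ₑ ^ p ∂μ + ∫⁻ x, ‖f x‖ₑ ^ q ∂μ :=
      lintegral_add_left' (hfp.1.enorm.pow_const p) _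
    _ < ⊤ := ENNReal.add_lt_top.mpr ⟨hfp.2, hfq.2⟩

end Lebesgue

theorem ENNReal.le_of_forall_le_rpow_add_rpow {a α β M g : ℝ≥0∞} {n s p q : ℝ} (hn : 0 < n)
    (hp : 0 < p) (hq : 1 / q = 1 / p - s / n) (hM0 : M ≠ 0) (hMt : M ≠ ⊤) (hg0 : g ≠ 0)
    (hgt : g ≠ ⊤)
    (h : ∀ r : ℝ, 0 < r →
      a ≤ α * ENNReal.ofReal r ^ s * g ^ (1 / p) + β * ENNReal.ofReal r ^ (-(n / q)) * M) :
    a ≤ (α + β) * M ^ (1 - p / q) * g ^ (1 / q) := by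
  set K := M ^ p * g⁻¹
  have hK0 : K ≠ 0 := mul_ne_zero (by simp [ENNReal.rpow_eq_zero_iff, hM0, hMt, hp])
    (ENNReal.inv_ne_zero.mpr hgt)
  have hKt : K ≠ ⊤ := ENNReal.mul_ne_top (by simp [ENNReal.rpow_eq_top_iff, hM0, hMt])
    (ENNReal.inv_ne_top.mpr hg0)
  have hKpow (b : ℝ) : K ^ b = M ^ (p * b) * g ^ (-b) := by
    rw [ENNReal.mul_rpow_of_ne_top (by simp [ENNReal.rpow_eq_top_iff, hM0, hMt])
      (ENNReal.inv_ne_top.mpr hg0), ← ENNReal.rpow_mul, ENNReal.inv_rpow, ← ENNReal.rpow_neg]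
  -- the radius balancing the two terms: `r ^ n = M ^ p / g`
  have hR0 : K ^ (1 / n) ≠ 0 := by simp [ENNReal.rpow_eq_zero_iff, hK0, hKt]
  have hRt : K ^ (1 / n) ≠ ⊤ := by simp [ENNReal.rpow_eq_top_iff, hK0, hKt]
  have h' := h (K ^ (1 / n)).toReal (ENNReal.toReal_pos hR0 hRt)
  rw [ENNReal.ofReal_toReal hRt, ← ENNReal.rpow_mul, ← ENNReal.rpow_mul, hKpow, hKpow] at h'
  have hpq : p / q = 1 - p * s / n := by
    rw [div_eq_mul_one_div p q, hq]
    field_simp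
  have e1 : M ^ (p * (1 / n * s)) * g ^ (-(1 / n * s)) * g ^ (1 / p) =
      M ^ (1 - p / q) * g ^ (1 / q) := by
    rw [mul_assoc, ← ENNReal.rpow_add _ _ hg0 hgt, hq, hpq]
    congr 2 <;> ring
  have e2 : M ^ (p * (1 / n * -(n / q))) * g ^ (-(1 / n * -(n / q))) * M =
      M ^ (1 - p / q) * g ^ (1 / q) := by
    nth_rw 2 [← ENNReal.rpow_one M]
    rw [mul_right_comm, ← ENNReal.rpow_add _ _ hM0 hMt]
    congr 2
    · field_simp
      ring
    · field_simp
  calc a ≤ _ := h'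
    _ = α * (M ^ (p * (1 / n * s)) * g ^ (-(1 / n * s)) * g ^ (1 / p)) +
          β * (M ^ (p * (1 / n * -(n / q))) * g ^ (-(1 / n * -(n / q))) * M) := by ring
    _ = _ := by rw [e1, e2]; ring

section Gagliardo

def gagliardoDensity (N : ℕ) (s p : ℝ) (u : Rn N → ℝ) (x : Rn N) : ℝ≥0∞ :=
  ∫⁻ y, ENNReal.ofReal (|u x - u y| ^ p / ‖x - y‖ ^ ((N : ℝ) + s * p))

variable {N : ℕ} {s p q : ℝ}

theorem lintegral_gagliardoDensity (u : Rn N → ℝ) :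
    ∫⁻ x, gagliardoDensity N s p u x = gagliardoEnergy N s p u := rfl

theorem gagliardoEnergy_comp_le {φ : ℝ → ℝ} (hφ : LipschitzWith 1 φ) (hp : 0 ≤ p)
    (u : Rn N → ℝ) : gagliardoEnergy N s p (φ ∘ u) ≤ gagliardoEnergy N s p u := by
  refine lintegral_mono fun x => lintegral_mono fun y => ENNReal.ofReal_le_ofReal ?_
  have h := hφ.dist_le_mul (u x) (u y)
  rw [NNReal.coe_one, one_mul, Real.dist_eq, Real.dist_eq] at h
  gcongr ?_ ^ _ / _
  exact h

theorem setLIntegral_ball_rpow_enorm_sub_le (hs : 0 ≤ s) (hp : 0 < p) (v : Rn N → ℝ)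
    (x : Rn N) {r : ℝ} (hr : 0 < r) :
    ∫⁻ y in ball x r, ‖v x - v y‖ₑ ^ p ≤
      ENNReal.ofReal r ^ ((N : ℝ) + s * p) * gagliardoDensity N s p v x := by
  have hk : 0 ≤ (N : ℝ) + s * p := by positivity
  have hpt : ∀ y ∈ ball x r, ‖v x - v y‖ₑ ^ p ≤ ENNReal.ofReal r ^ ((N : ℝ) + s * p) *
      ENNReal.ofReal (|v x - v y| ^ p / ‖x - y‖ ^ ((N : ℝ) + s * p)) := by
    intro y hy
    rw [Real.enorm_eq_ofReal_abs, ENNReal.ofReal_rpow_of_nonneg (abs_nonneg _) hp.le,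
      ENNReal.ofReal_rpow_of_pos hr, ← ENNReal.ofReal_mul (by positivity)]
    refine ENNReal.ofReal_le_ofReal ?_
    rcases eq_or_ne y x with rfl | hne
    · simp [Real.zero_rpow hp.ne']
    have hd : 0 < ‖x - y‖ ^ ((N : ℝ) + s * p) :=
      Real.rpow_pos_of_pos (norm_sub_pos_iff.mpr hne.symm) _
    have hdr : ‖x - y‖ ^ ((N : ℝ) + s * p) ≤ r ^ ((N : ℝ) + s * p) := by
      gcongr
      rw [← dist_eq_norm, dist_comm]
      exact (mem_ball.mp hy).le
    rw [mul_div_assoc', le_div_iff₀ hd, mul_comm (r ^ _)]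
    exact mul_le_mul_of_nonneg_left hdr (by positivity)
  calc ∫⁻ y in ball x r, ‖v x - v y‖ₑ ^ p
      ≤ ∫⁻ y in ball x r, ENNReal.ofReal r ^ ((N : ℝ) + s * p) *
          ENNReal.ofReal (|v x - v y| ^ p / ‖x - y‖ ^ ((N : ℝ) + s * p)) :=
        setLIntegral_mono' measurableSet_ball hpt
    _ ≤ ENNReal.ofReal r ^ ((N : ℝ) + s * p) * gagliardoDensity N s p v x := by
        rw [lintegral_const_mul' _ _ (ENNReal.rpow_lt_top_of_nonneg hk ENNReal.ofReal_ne_top).ne]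
        gcongr
        exact setLIntegral_le_lintegral _ _

theorem volume_ball_eq_rpow_mul (x : Rn N) {r : ℝ} (hr : 0 < r) :
    volume (ball x r) = ENNReal.ofReal r ^ (N : ℝ) * volume (ball (0 : Rn N) 1) := by
  rw [← mul_one r, Measure.addHaar_ball_mul_of_pos volume x hr, finrank_euclideanSpace_fin,
    ENNReal.ofReal_pow hr.le, ENNReal.rpow_natCast, mul_one]

theorem enorm_le_gagliardoDensity_add_eLpNorm (hs : 0 ≤ s) (hp : 1 ≤ p) (hq : 1 ≤ q)
    {v : Rn N → ℝ} (hv : AEStronglyMeasurable v volume) (x : Rn N) {r : ℝ} (hr : 0 < r) :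
    ‖v x‖ₑ ≤ volume (ball (0 : Rn N) 1) ^ (-(1 / p)) * ENNReal.ofReal r ^ s *
        gagliardoDensity N s p v x ^ (1 / p) +
      volume (ball (0 : Rn N) 1) ^ (-(1 / q)) * ENNReal.ofReal r ^ (-(N / q)) *
        eLpNorm v (ENNReal.ofReal q) volume := by
  set ω := volume (ball (0 : Rn N) 1)
  set R := ENNReal.ofReal r
  have hR0 : R ≠ 0 := (ENNReal.ofReal_pos.mpr hr).ne'
  have hRt : R ≠ ⊤ := ENNReal.ofReal_ne_top
  have hω0 : ω ≠ 0 := (measure_ball_pos volume _ one_pos).ne'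
  have hV (a : ℝ) : volume (ball x r) ^ (-(1 / a)) = ω ^ (-(1 / a)) * R ^ (-(N / a)) := by
    rw [volume_ball_eq_rpow_mul x hr, ENNReal.mul_rpow_of_ne_zero (ENNReal.rpow_pos
      (pos_iff_ne_zero.mpr hR0) hRt).ne' hω0, ← ENNReal.rpow_mul, mul_comm]
    congr 2
    ring
  have hsub : eLpNorm (fun y => v x - v y) (ENNReal.ofReal p) (volume.restrict (ball x r)) ≤
      (R ^ ((N : ℝ) + s * p) * gagliardoDensity N s p v x) ^ (1 / p) := by
    have hp0 : 0 < p := by linarith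
    rw [eLpNorm_eq_lintegral_rpow_enorm_toReal (by simpa using hp0) ENNReal.ofReal_ne_top,
      ENNReal.toReal_ofReal hp0.le]
    gcongr
    exact setLIntegral_ball_rpow_enorm_sub_le hs hp0 v x hr
  calc ‖v x‖ₑ ≤ volume (ball x r) ^ (-(1 / p)) *
          eLpNorm (fun y => v x - v y) (ENNReal.ofReal p) (volume.restrict (ball x r)) +
        volume (ball x r) ^ (-(1 / q)) *
          eLpNorm v (ENNReal.ofReal q) (volume.restrict (ball x r)) :=
      enorm_le_measure_rpow_mul_eLpNorm_add (measure_ball_pos volume x hr).ne'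
        measure_ball_lt_top.ne (v x) hv.restrict hp hq
    _ ≤ volume (ball x r) ^ (-(1 / p)) *
          (R ^ ((N : ℝ) + s * p) * gagliardoDensity N s p v x) ^ (1 / p) +
        volume (ball x r) ^ (-(1 / q)) * eLpNorm v (ENNReal.ofReal q) volume := by
      gcongr
      exact Measure.restrict_le_self
    _ = _ := by
      have hRs : R ^ (-(N / p)) * R ^ (((N : ℝ) + s * p) * (1 / p)) = R ^ s := by
        rw [← ENNReal.rpow_add _ _ hR0 hRt]
        congr 1
        field_simp
        ring
      rw [hV, hV, ENNReal.mul_rpow_of_nonneg _ _ (by positivity), ← ENNReal.rpow_mul, ← hRs]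
      ring

end Gagliardo

section Sobolev

def fracSobolevExponent (N : ℕ) (s p : ℝ) : ℝ := N * p / (N - s * p)

def fracSobolevConst (N : ℕ) (s p : ℝ) : ℝ≥0∞ :=
  volume (ball (0 : Rn N) 1) ^ (-(1 / p)) +
    volume (ball (0 : Rn N) 1) ^ (-(1 / fracSobolevExponent N s p))

variable {N : ℕ} {s p : ℝ}

theorem one_div_fracSobolevExponent (hN : 0 < (N : ℝ)) (hp : 0 < p) (hsp : s * p < N) :
    1 / fracSobolevExponent N s p = 1 / p - s / N := by
  have : (N : ℝ) - s * p ≠ 0 := by linarith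
  unfold fracSobolevExponent
  field_simp

theorem lt_fracSobolevExponent (hs : 0 < s) (hp : 0 < p) (hsp : s * p < N) :
    p < fracSobolevExponent N s p := by
  unfold fracSobolevExponent
  rw [lt_div_iff₀ (by linarith)]
  nlinarith [mul_pos (mul_pos hs hp) hp]

theorem fracSobolevConst_ne_zero : fracSobolevConst N s p ≠ 0 := by
  simp [fracSobolevConst, ENNReal.rpow_eq_zero_iff, measure_ball_lt_top.ne,
    (measure_ball_pos volume (0 : Rn N) one_pos).ne']

theorem fracSobolevConst_ne_top : fracSobolevConst N s p ≠ ⊤ := by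
  simp [fracSobolevConst, ENNReal.rpow_eq_top_iff, measure_ball_lt_top.ne,
    (measure_ball_pos volume (0 : Rn N) one_pos).ne']

theorem enorm_rpow_le_mul_gagliardoDensity (hs : 0 < s) (hp : 1 ≤ p) (hsp : s * p < N)
    {v : Rn N → ℝ} (hv : AEStronglyMeasurable v volume)
    (hM0 : eLpNorm v (ENNReal.ofReal (fracSobolevExponent N s p)) volume ≠ 0)
    (hMt : eLpNorm v (ENNReal.ofReal (fracSobolevExponent N s p)) volume ≠ ⊤) (x : Rn N) :
    ‖v x‖ₑ ^ fracSobolevExponent N s p ≤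
      fracSobolevConst N s p ^ fracSobolevExponent N s p *
        eLpNorm v (ENNReal.ofReal (fracSobolevExponent N s p)) volume ^
          (fracSobolevExponent N s p - p) * gagliardoDensity N s p v x := by
  set q := fracSobolevExponent N s p
  set M := eLpNorm v (ENNReal.ofReal q) volume
  set c := fracSobolevConst N s p ^ q * M ^ (q - p)
  have hp0 : 0 < p := by linarith
  have hN : 0 < (N : ℝ) := by nlinarith
  have hpq : p < q := lt_fracSobolevExponent hs hp0 hsp
  have hc0 : c ≠ 0 := mul_ne_zero
    (ENNReal.rpow_pos (pos_iff_ne_zero.mpr fracSobolevConst_ne_zero) fracSobolevConst_ne_top).ne'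
    (ENNReal.rpow_pos (pos_iff_ne_zero.mpr hM0) hMt).ne'
  have hct : c ≠ ⊤ := ENNReal.mul_ne_top
    (ENNReal.rpow_ne_top_of_ne_zero fracSobolevConst_ne_zero fracSobolevConst_ne_top)
    (ENNReal.rpow_ne_top_of_ne_zero hM0 hMt)
  -- `G(x)` may vanish, so the radius is optimised for every `g > G(x)` and then `g ↓ G(x)`.
  have key (g : ℝ≥0∞) (hg : gagliardoDensity N s p v x < g) (hgt : g ≠ ⊤) :
      ‖v x‖ₑ ^ q ≤ c * g := by
    have h := ENNReal.le_of_forall_le_rpow_add_rpow hN hp0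
      (one_div_fracSobolevExponent hN hp0 hsp) hM0 hMt (hg.trans_le' zero_le).ne' hgt
      fun r hr => (enorm_le_gagliardoDensity_add_eLpNorm (q := q) hs.le hp (by linarith) hv x
        hr).trans (by gcongr)
    calc ‖v x‖ₑ ^ q ≤ ((fracSobolevConst N s p) * M ^ (1 - p / q) * g ^ (1 / q)) ^ q :=
          ENNReal.rpow_le_rpow h (by linarith)
      _ = c * g := by
        rw [ENNReal.mul_rpow_of_nonneg _ _ (by linarith), ENNReal.mul_rpow_of_nonneg _ _
          (by linarith), ← ENNReal.rpow_mul, ← ENNReal.rpow_mul, one_div_mul_cancel (by linarith),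
          ENNReal.rpow_one, sub_mul, div_mul_cancel₀ _ (by linarith), one_mul]
  suffices ‖v x‖ₑ ^ q / c ≤ gagliardoDensity N s p v x by
    rwa [ENNReal.div_le_iff hc0 hct, mul_comm] at this
  refine le_of_forall_gt_imp_ge_of_dense fun g hg => ?_
  rcases eq_or_ne g ⊤ with rfl | hgt
  · exact le_top
  rw [ENNReal.div_le_iff hc0 hct, mul_comm]
  exact key g hg hgt

theorem eLpNorm_le_gagliardoSemi_of_eLpNorm_ne_top (hs : 0 < s) (hp : 1 ≤ p) (hsp : s * p < N)
    {v : Rn N → ℝ} (hv : AEStronglyMeasurable v volume)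
    (hMt : eLpNorm v (ENNReal.ofReal (fracSobolevExponent N s p)) volume ≠ ⊤) :
    eLpNorm v (ENNReal.ofReal (fracSobolevExponent N s p)) volume ≤
      fracSobolevConst N s p ^ (fracSobolevExponent N s p / p) * gagliardoSemi N s p v := by
  set q := fracSobolevExponent N s p
  set M := eLpNorm v (ENNReal.ofReal q) volume with hM
  set A := fracSobolevConst N s p
  have hp0 : 0 < p := by linarith
  have hpq : p < q := lt_fracSobolevExponent hs hp0 hsp
  have hq0 : 0 < q := by linarith
  rcases eq_or_ne M 0 with hM0 | hM0
  · rw [hM0]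
    exact zero_le
  have hMq : M ^ p * M ^ (q - p) ≤ A ^ q * gagliardoEnergy N s p v * M ^ (q - p) := by
    calc M ^ p * M ^ (q - p) = ∫⁻ x, ‖v x‖ₑ ^ q := by
          rw [← ENNReal.rpow_add _ _ hM0 hMt, add_sub_cancel, lintegral_rpow_enorm_eq_rpow_eLpNorm'
            hq0, hM, eLpNorm_eq_eLpNorm' (by simpa using hq0) ENNReal.ofReal_ne_top,
            ENNReal.toReal_ofReal hq0.le]
      _ ≤ ∫⁻ x, A ^ q * M ^ (q - p) * gagliardoDensity N s p v x :=
          lintegral_mono (enorm_rpow_le_mul_gagliardoDensity hs hp hsp hv hM0 hMt)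
      _ = A ^ q * gagliardoEnergy N s p v * M ^ (q - p) := by
          rw [lintegral_const_mul' _ _ (ENNReal.mul_ne_top
            (ENNReal.rpow_ne_top_of_ne_zero fracSobolevConst_ne_zero fracSobolevConst_ne_top)
            (ENNReal.rpow_ne_top_of_ne_zero hM0 hMt)), lintegral_gagliardoDensity]
          ring
  have hMp : M ^ p ≤ A ^ q * gagliardoEnergy N s p v :=
    (ENNReal.mul_le_mul_iff_left (ENNReal.rpow_pos (pos_iff_ne_zero.mpr hM0) hMt).ne'
      (ENNReal.rpow_ne_top_of_ne_zero hM0 hMt)).mp hMq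
  calc M = (M ^ p) ^ (1 / p) := by rw [← ENNReal.rpow_mul, mul_one_div_cancel hp0.ne',
        ENNReal.rpow_one]
    _ ≤ (A ^ q * gagliardoEnergy N s p v) ^ (1 / p) := by gcongr
    _ = A ^ (q / p) * gagliardoSemi N s p v := by
      rw [ENNReal.mul_rpow_of_nonneg _ _ (by positivity), ← ENNReal.rpow_mul, mul_one_div]
      rfl

theorem eLpNorm_le_gagliardoSemi (hs : 0 < s) (hp : 1 ≤ p) (hsp : s * p < N)
    {u : Rn N → ℝ} (hu : MemWsp N s p u) :
    eLpNorm u (ENNReal.ofReal (fracSobolevExponent N s p)) volume ≤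
      fracSobolevConst N s p ^ (fracSobolevExponent N s p / p) * gagliardoSemi N s p u := by
  set q := fracSobolevExponent N s p
  have hp0 : 0 < p := by linarith
  have hpq : p < q := lt_fracSobolevExponent hs hp0 hsp
  set v : ℕ → Rn N → ℝ := fun n x => min ‖u x‖ n
  have hφ (n : ℕ) : LipschitzWith 1 fun t : ℝ => min ‖t‖ (n : ℝ) :=
    lipschitzWith_one_norm.min_const n
  have hvm (n : ℕ) : AEStronglyMeasurable (v n) volume :=
    (hφ n).continuous.comp_aestronglyMeasurable hu.1.1
  have hvq (n : ℕ) : eLpNorm (v n) (ENNReal.ofReal q) volume ≠ ⊤ := by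
    refine (MemLp.of_bound_of_exponent_le n hp0 hpq.le (hu.1.mono (hvm n) (ae_of_all _ fun x => ?_))
      fun x => ?_).eLpNorm_ne_top
    · rw [Real.norm_of_nonneg (by positivity)]
      exact min_le_left _ _
    · rw [Real.norm_of_nonneg (by positivity)]
      exact min_le_right _ _
  have hv_le (n : ℕ) : eLpNorm (v n) (ENNReal.ofReal q) volume ≤
      fracSobolevConst N s p ^ (q / p) * gagliardoSemi N s p u :=
    (eLpNorm_le_gagliardoSemi_of_eLpNorm_ne_top hs hp hsp (hvm n) (hvq n)).trans
      (mul_le_mul_right (ENNReal.rpow_le_rpow (gagliardoEnergy_comp_le (hφ n) hp0.le u)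
        (by positivity)) _)
  have hv_lim : ∀ᵐ x ∂volume, Tendsto (fun n => v n x) atTop (𝓝 ‖u x‖) :=
    ae_of_all _ fun x => tendsto_const_nhds.congr' ((eventually_ge_atTop ⌈‖u x‖⌉₊).mono
      fun n hn => (min_eq_left ((Nat.le_ceil _).trans (Nat.cast_le.mpr hn))).symm)
  calc eLpNorm u (ENNReal.ofReal q) volume = eLpNorm (fun x => ‖u x‖) (ENNReal.ofReal q) volume :=
        (eLpNorm_norm u).symm
    _ ≤ liminf (fun n => eLpNorm (v n) (ENNReal.ofReal q) volume) atTop :=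
        Lp.eLpNorm_lim_le_liminf_eLpNorm hvm _ hv_lim
    _ ≤ _ := liminf_le_of_frequently_le' (Frequently.of_forall hv_le)

end Sobolev

theorem fractional_sobolev_inequality_general (N : ℕ) (s p : ℝ)
    (hs : s ∈ Ioo (0 : ℝ) 1) (hp : 1 ≤ p) (hpN : p < (N : ℝ) / s) :
    ∃ C : ℝ, 0 < C ∧ ∀ u : Rn N → ℝ, MemWsp N s p u →
      (eLpNorm u (ENNReal.ofReal ((N : ℝ) * p / ((N : ℝ) - s * p))) volume ≤
        ENNReal.ofReal C * gagliardoSemi N s p u) ∧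
      ∀ q : ℝ, p ≤ q → q ≤ (N : ℝ) * p / ((N : ℝ) - s * p) →
        MemLp u (ENNReal.ofReal q) volume := by
  have hsp : s * p < N := by linarith [(lt_div_iff₀ hs.1).mp hpN]
  set C := fracSobolevConst N s p ^ (fracSobolevExponent N s p / p)
  have hC0 : C ≠ 0 :=
    (ENNReal.rpow_pos (pos_iff_ne_zero.mpr fracSobolevConst_ne_zero) fracSobolevConst_ne_top).ne'
  have hCt : C ≠ ⊤ :=
    ENNReal.rpow_ne_top_of_ne_zero fracSobolevConst_ne_zero fracSobolevConst_ne_top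
  refine ⟨C.toReal, ENNReal.toReal_pos hC0 hCt, fun u hu => ?_⟩
  have hsob : eLpNorm u (ENNReal.ofReal (fracSobolevExponent N s p)) volume ≤
      ENNReal.ofReal C.toReal * gagliardoSemi N s p u := by
    rw [ENNReal.ofReal_toReal hCt]
    exact eLpNorm_le_gagliardoSemi hs.1 hp hsp hu
  refine ⟨hsob, fun q hpq hq => MemLp.of_exponent_mem_Icc (by linarith) hpq hq hu.1
    ⟨hu.1.1, hsob.trans_lt (ENNReal.mul_lt_top ENNReal.ofReal_lt_top ?_)⟩⟩
  exact ENNReal.rpow_lt_top_of_nonneg (by positivity) hu.2.ne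

/-- **Fractional Sobolev inequality.** For `1 ≤ p < N/s` and `p*_s = Np/(N−sp)`,
there is `C = C(N,s,p) > 0` with `‖u‖_{L^{p*_s}} ≤ C [u]_{W^{s,p}}` for every
`u ∈ W^{s,p}(ℝ^N)`; in particular `u ∈ L^q(ℝ^N)` for every `q ∈ [p, p*_s]`. -/
theorem fractional_sobolev_inequality (N : ℕ) (hN : 1 ≤ N) (s p : ℝ)
    (hs : s ∈ Ioo (0 : ℝ) 1) (hp : 1 ≤ p) (hpN : p < (N : ℝ) / s) :
    ∃ C : ℝ, 0 < C ∧ ∀ u : Rn N → ℝ, MemWsp N s p u →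
      (eLpNorm u (ENNReal.ofReal ((N : ℝ) * p / ((N : ℝ) - s * p))) volume ≤
        ENNReal.ofReal C * gagliardoSemi N s p u) ∧
      ∀ q : ℝ, p ≤ q → q ≤ (N : ℝ) * p / ((N : ℝ) - s * p) →
        MemLp u (ENNReal.ofReal q) volume :=
  fractional_sobolev_inequality_general N s p hs hp hpN
end
end

section
/- (Truncation decomposition of the one-sided Gaussian energy) Let N ≥ 1, 1 ≤ p < ∞, let u : ℝ^N → [0,∞) be measurable, let M > 0, and set u_M := min(u, M) and v_M := u − u_M. Define, for t > 0 and a measurable w : ℝ^N → ℝ, I_t^+[w] := ∫_{ℝ^N}∫_{ℝ^N} ((w(x)−w(y))_+)^p e^{−t|x−y|²} dx dy, and define F_M(v, a) := ((v + M − a)_+)^p − (v_+)^p − ((M − a)_+)^p. Then for every t > 0 the exact identity holds in [0,∞]: I_t^+[u] = I_t^+[u_M] + I_t^+[v_M] + ∫_{ℝ^N}∫_{ℝ^N} F_M(v_M(x), u_M(y)) e^{−t|x−y|²} dx dy, where all three terms on the right-hand side are nonnegative (in particular F_M(v, a) ≥ 0 whenever v ≥ 0 and 0 ≤ a ≤ M).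 -/
open MeasureTheory Set Metric Filter
open scoped ENNReal NNReal Topology

noncomputable section

/-! Pointwise, splitting `u` at height `M` and checking the four cases `u x ≶ M`, `u y ≶ M`
decomposes `((u x - u y)₊)^p` exactly into the three integrands. For `p ≥ 1` the map `z ↦ z^p`
is superadditive on `[0, ∞)`, so the defect term is nonnegative and Tonelli splits the double
integral term by term. -/
namespace MeasureTheory

theorem lintegral_lintegral_add_left {α β : Type*} [MeasurableSpace α] [MeasurableSpace β]
    {μ : Measure α} {ν : Measure β} [SFinite ν] {f : α → β → ℝ≥0∞}
    (hf : Measurable (Function.uncurry f)) (g : α → β → ℝ≥0∞) :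
    ∫⁻ x, ∫⁻ y, f x y + g x y ∂ν ∂μ = ∫⁻ x, ∫⁻ y, f x y ∂ν ∂μ + ∫⁻ x, ∫⁻ y, g x y ∂ν ∂μ := by
  simp_rw [lintegral_add_left hf.of_uncurry_left]
  exact lintegral_add_left hf.lintegral_prod_right _

end MeasureTheory

/-- The paper's `F_M(v, a)` for `φ = (· ^ p)`. -/
def truncationDefect (φ : ℝ → ℝ) (M v a : ℝ) : ℝ :=
  φ (max (v + M - a) 0) - φ (max v 0) - φ (max (M - a) 0)

theorem truncationDefect_rpow_nonneg {p M v a : ℝ} (hp : 1 ≤ p) (hv : 0 ≤ v) (ha : a ≤ M) :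
    0 ≤ truncationDefect (· ^ p) M v a := by
  have hMa : 0 ≤ M - a := sub_nonneg.2 ha
  have := Real.add_rpow_le_rpow_add hv hMa hp
  rw [← add_sub_assoc] at this
  simp only [truncationDefect, max_eq_left hv, max_eq_left hMa,
    max_eq_left (by linarith : 0 ≤ v + M - a)]
  linarith

theorem apply_max_sub_zero_eq_add_truncationDefect {φ : ℝ → ℝ} (hφ : φ 0 = 0) (M a b : ℝ) :
    φ (max (a - b) 0) =
      φ (max (min a M - min b M) 0) + φ (max ((a - min a M) - (b - min b M)) 0) +
        truncationDefect φ M (a - min a M) (min b M) := by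
  unfold truncationDefect
  rcases le_total a M with ha | ha <;> rcases le_total b M with hb | hb
  · simp [ha, hb]
  · simp [ha, hb, hφ, max_eq_right (by linarith : a - b ≤ 0)]
  · simp only [ha, hb, inf_of_le_left, inf_of_le_right, sub_self, sub_zero, sub_add_cancel,
      sub_nonneg, sup_of_le_left, max_eq_left (by linarith : 0 ≤ a - b)]
    ring
  · simp [ha, hb, hφ]

theorem truncation_decomposition_one_sided_energy_general (N : ℕ) (p : ℝ)
    (hp : 1 ≤ p) (u : Rn N → ℝ) (hmeas : Measurable u)
    (M : ℝ) (t : ℝ)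
    (uM vM : Rn N → ℝ) (huM : uM = fun x => min (u x) M)
    (hvM : vM = fun x => u x - min (u x) M) :
    (∀ v a : ℝ, 0 ≤ v → 0 ≤ a → a ≤ M →
      0 ≤ max (v + M - a) 0 ^ p - max v 0 ^ p - max (M - a) 0 ^ p) ∧
    (∫⁻ x, ∫⁻ y, ENNReal.ofReal
        (max (u x - u y) 0 ^ p * Real.exp (-t * ‖x - y‖ ^ 2))) =
      (∫⁻ x, ∫⁻ y, ENNReal.ofReal
          (max (uM x - uM y) 0 ^ p * Real.exp (-t * ‖x - y‖ ^ 2))) +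
      (∫⁻ x, ∫⁻ y, ENNReal.ofReal
          (max (vM x - vM y) 0 ^ p * Real.exp (-t * ‖x - y‖ ^ 2))) +
      ∫⁻ x, ∫⁻ y, ENNReal.ofReal
          ((max (vM x + M - uM y) 0 ^ p - max (vM x) 0 ^ p - max (M - uM y) 0 ^ p) *
            Real.exp (-t * ‖x - y‖ ^ 2)) := by
  subst huM hvM
  have hp0 : (0 : ℝ) ^ p = 0 := Real.zero_rpow (by linarith)
  have split : ∀ x y : Rn N,
      ENNReal.ofReal (max (u x - u y) 0 ^ p * Real.exp (-t * ‖x - y‖ ^ 2)) =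
        ENNReal.ofReal (max (min (u x) M - min (u y) M) 0 ^ p * Real.exp (-t * ‖x - y‖ ^ 2)) +
        ENNReal.ofReal (max ((u x - min (u x) M) - (u y - min (u y) M)) 0 ^ p *
          Real.exp (-t * ‖x - y‖ ^ 2)) +
        ENNReal.ofReal (truncationDefect (· ^ p) M (u x - min (u x) M) (min (u y) M) *
          Real.exp (-t * ‖x - y‖ ^ 2)) := by
    intro x y
    have hF := truncationDefect_rpow_nonneg (M := M) hp (sub_nonneg.2 (min_le_left (u x) M))
      (min_le_right (u y) M)
    rw [apply_max_sub_zero_eq_add_truncationDefect (φ := (· ^ p)) hp0 M, add_mul, add_mul,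
      ENNReal.ofReal_add (by positivity) (by positivity),
      ENNReal.ofReal_add (by positivity) (by positivity)]
  refine ⟨fun v a hv _ haM => truncationDefect_rpow_nonneg hp hv haM, ?_⟩
  simp_rw [split]
  rw [lintegral_lintegral_add_left (by fun_prop), lintegral_lintegral_add_left (by fun_prop)]
  rfl

/-- **Truncation decomposition of the one-sided Gaussian energy.** With
`u_M = min(u,M)`, `v_M = u − u_M`,
`I_t^+[w] = ∫∫ ((w(x)−w(y))_+)^p e^{−t|x−y|²} dx dy` and
`F_M(v,a) = ((v+M−a)_+)^p − (v_+)^p − ((M−a)_+)^p`, one has `F_M(v,a) ≥ 0`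
for `v ≥ 0`, `0 ≤ a ≤ M`, and the exact identity
`I_t^+[u] = I_t^+[u_M] + I_t^+[v_M] + ∫∫ F_M(v_M(x), u_M(y)) e^{−t|x−y|²} dx dy`
holds in `[0,∞]`. -/
theorem truncation_decomposition_one_sided_energy (N : ℕ) (hN : 1 ≤ N) (p : ℝ)
    (hp : 1 ≤ p) (u : Rn N → ℝ) (hmeas : Measurable u) (hpos : ∀ x, 0 ≤ u x)
    (M : ℝ) (hM : 0 < M) (t : ℝ) (ht : 0 < t)
    (uM vM : Rn N → ℝ) (huM : uM = fun x => min (u x) M)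
    (hvM : vM = fun x => u x - min (u x) M) :
    (∀ v a : ℝ, 0 ≤ v → 0 ≤ a → a ≤ M →
      0 ≤ max (v + M - a) 0 ^ p - max v 0 ^ p - max (M - a) 0 ^ p) ∧
    (∫⁻ x, ∫⁻ y, ENNReal.ofReal
        (max (u x - u y) 0 ^ p * Real.exp (-t * ‖x - y‖ ^ 2))) =
      (∫⁻ x, ∫⁻ y, ENNReal.ofReal
          (max (uM x - uM y) 0 ^ p * Real.exp (-t * ‖x - y‖ ^ 2))) +
      (∫⁻ x, ∫⁻ y, ENNReal.ofReal
          (max (vM x - vM y) 0 ^ p * Real.exp (-t * ‖x - y‖ ^ 2))) +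
      ∫⁻ x, ∫⁻ y, ENNReal.ofReal
          ((max (vM x + M - uM y) 0 ^ p - max (vM x) 0 ^ p - max (M - uM y) 0 ^ p) *
            Real.exp (-t * ‖x - y‖ ^ 2)) :=
  truncation_decomposition_one_sided_energy_general N p hp u hmeas M t uM vM huM hvM
end
end
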